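/- arXiv:1509.08571 — 2 statements merged into one kernel-verified Lean document; each statement's English description precedes it below -/
import Mathlib

section
/- Let p and p̃ be probability distributions on 𝒮 (not necessarily of full support) with support(p) = support(p̃). Then v_sup^s(p, 𝒯_A, 𝒯_B) = v_sup^s(p̃, 𝒯_A, 𝒯_B) and v_sup^w(p, 𝒯_A, 𝒯_B) = v_sup^w(p̃, 𝒯_A, 𝒯_B); i.e., the suprema of strongly and weakly guaranteeable values depend on the prior only through its support. -/
open Finset

/-- A behavioral strategy in the `n`-stage repeated game: at stage `i`, given the history of
past actions of both players (only the first `i` coordinates of the supplied sequences matter,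
as enforced by `causal`) and the player's side information `si`, it assigns a probability to
each action `x`. -/
structure BehavStrategy (A B SI Act : Type*) [Fintype A] [Fintype B] [Fintype Act] (n : ℕ) where
  prob : Fin n → (Fin n → A) → (Fin n → B) → SI → Act → ℝ
  nonneg : ∀ i ha hb si x, 0 ≤ prob i ha hb si x
  sum_one : ∀ i ha hb si, ∑ x, prob i ha hb si x = 1
  causal : ∀ (i : Fin n) (ha ha' : Fin n → A) (hb hb' : Fin n → B) (si : SI),
    (∀ j : Fin n, (j : ℕ) < (i : ℕ) → ha j = ha' j) →
    (∀ j : Fin n, (j : ℕ) < (i : ℕ) → hb j = hb' j) →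
    prob i ha hb si = prob i ha' hb' si

variable {S SA SB A B : Type*} [Fintype S] [Fintype A] [Fintype B]

/-- The probability that the state is `s` and the action sequences are `a, b`, under prior `p`,
side-information maps `TA, TB`, and behavioral strategies `α` (Alice) and `β` (Bob). -/
noncomputable def inducedP (p : S → ℝ) (TA : S → SA) (TB : S → SB) {n : ℕ}
    (α : BehavStrategy A B SA A n) (β : BehavStrategy A B SB B n)
    (s : S) (a : Fin n → A) (b : Fin n → B) : ℝ :=
  p s * ∏ i, (α.prob i a b (TA s) (a i) * β.prob i a b (TB s) (b i))

/-- Alice's time-average payoff `σ_n`. -/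
noncomputable def avgPay (g : S → A → B → ℝ) {n : ℕ} (s : S) (a : Fin n → A) (b : Fin n → B) : ℝ :=
  (n : ℝ)⁻¹ * ∑ i, g s (a i) (b i)

open scoped Classical in
/-- `P(σ_n < v)` under the induced distribution. -/
noncomputable def probBelow (g : S → A → B → ℝ) (p : S → ℝ) (TA : S → SA) (TB : S → SB)
    {n : ℕ} (α : BehavStrategy A B SA A n) (β : BehavStrategy A B SB B n) (v : ℝ) : ℝ :=
  ∑ s : S, ∑ a : Fin n → A, ∑ b : Fin n → B,
    if avgPay g s a b < v then inducedP p TA TB α β s a b else 0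

/-- Alice strongly guarantees `v`. -/
def StronglyGuarantees (g : S → A → B → ℝ) (p : S → ℝ) (TA : S → SA) (TB : S → SB)
    (v : ℝ) : Prop :=
  ∀ ε : ℝ, 0 < ε → ∃ N : ℕ, ∀ n : ℕ, N < n → ∃ α : BehavStrategy A B SA A n,
    ∀ β : BehavStrategy A B SB B n, probBelow g p TA TB α β v < ε

/-- Alice weakly guarantees `v`. -/
def WeaklyGuarantees (g : S → A → B → ℝ) (p : S → ℝ) (TA : S → SA) (TB : S → SB)
    (v : ℝ) : Prop :=
  ∀ ε : ℝ, 0 < ε → ∃ N : ℕ, ∀ n : ℕ, N < n → ∀ β : BehavStrategy A B SB B n,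
    ∃ α : BehavStrategy A B SA A n, probBelow g p TA TB α β v < ε

/-- `v_sup^s`, the supremum of strongly guaranteeable values. -/
noncomputable def vsupS (g : S → A → B → ℝ) (p : S → ℝ) (TA : S → SA) (TB : S → SB) : ℝ :=
  sSup {v : ℝ | StronglyGuarantees g p TA TB v}

/-- `v_sup^w`, the supremum of weakly guaranteeable values. -/
noncomputable def vsupW (g : S → A → B → ℝ) (p : S → ℝ) (TA : S → SA) (TB : S → SB) : ℝ :=
  sSup {v : ℝ | WeaklyGuarantees g p TA TB v}

/-- `u(q)`: the value of the one-stage game with averaged payoff table `∑ s, q s • g s`. -/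
noncomputable def uVal (g : S → A → B → ℝ) (q : S → ℝ) : ℝ :=
  ⨆ x : {x : A → ℝ // (∀ a, 0 ≤ x a) ∧ ∑ a, x a = 1},
    ⨅ b : B, ∑ s : S, ∑ a : A, q s * x.1 a * g s a b

/-- Expected time-average payoff `E[σ_n]`. -/
noncomputable def expPay (g : S → A → B → ℝ) (p : S → ℝ) (TA : S → SA) (TB : S → SB)
    {n : ℕ} (α : BehavStrategy A B SA A n) (β : BehavStrategy A B SB B n) : ℝ :=
  ∑ s : S, ∑ a : Fin n → A, ∑ b : Fin n → B,
    inducedP p TA TB α β s a b * avgPay g s a b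

/-- `V_n(q)`: the maximin expected average payoff of the `n`-stage game with prior `q`,
no side information for Alice and full information for Bob. -/
noncomputable def Vn (g : S → A → B → ℝ) (q : S → ℝ) (n : ℕ) : ℝ :=
  ⨆ α : BehavStrategy A B Unit A n, ⨅ β : BehavStrategy A B S B n,
    expPay g q (fun _ => ()) (id : S → S) α β

/-!
On a finite state space, two priors with the same support dominate each other up to a positive
constant: `p̃ ≤ c • p` and `p ≤ c' • p̃`. Since `P(σ_n < v)` is linear and monotone in the prior
(for fixed strategies), a strategy keeping it below `ε / c` under `p` keeps it below `ε` under
`p̃`. Hence both priors admit the same guaranteeable values, strongly and weakly, and the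
suprema agree.
-/

lemma exists_pos_le_mul_of_pos_imp_pos (p q : S → ℝ) (hp0 : ∀ s, 0 ≤ p s) (hq0 : ∀ s, 0 ≤ q s)
    (hsupp : ∀ s, 0 < q s → 0 < p s) : ∃ c : ℝ, 0 < c ∧ ∀ s, q s ≤ c * p s := by
  have hratio : ∀ s, 0 ≤ q s / p s := fun s => div_nonneg (hq0 s) (hp0 s)
  have hsum : 0 ≤ ∑ s, q s / p s := sum_nonneg fun s _ => hratio s
  refine ⟨1 + ∑ s, q s / p s, by linarith, fun s => ?_⟩
  rcases (hq0 s).lt_or_eq with hqs | hqs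
  · have hps := hsupp s hqs
    calc q s = q s / p s * p s := by field_simp
      _ ≤ (1 + ∑ t, q t / p t) * p s := by
          gcongr
          linarith [single_le_sum (fun t _ => hratio t) (mem_univ s)]
  · rw [← hqs]
    exact mul_nonneg (by linarith) (hp0 s)

lemma probBelow_le_mul_of_le_mul (g : S → A → B → ℝ) (p q : S → ℝ) (TA : S → SA) (TB : S → SB)
    {n : ℕ} (α : BehavStrategy A B SA A n) (β : BehavStrategy A B SB B n) (v c : ℝ)
    (hc : ∀ s, q s ≤ c * p s) :
    probBelow g q TA TB α β v ≤ c * probBelow g p TA TB α β v := by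
  classical
  simp only [probBelow, mul_sum]
  gcongr with s _ a _ b _
  split_ifs
  · have hprod : 0 ≤ ∏ i, (α.prob i a b (TA s) (a i) * β.prob i a b (TB s) (b i)) :=
      prod_nonneg fun i _ => mul_nonneg (α.nonneg ..) (β.nonneg ..)
    simp only [inducedP, ← mul_assoc]
    exact mul_le_mul_of_nonneg_right (hc s) hprod
  · simp

lemma StronglyGuarantees.of_le_mul {g : S → A → B → ℝ} {p q : S → ℝ} {TA : S → SA} {TB : S → SB}
    {v c : ℝ} (hc0 : 0 < c) (hc : ∀ s, q s ≤ c * p s) (h : StronglyGuarantees g p TA TB v) :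
    StronglyGuarantees g q TA TB v := by
  intro ε hε
  obtain ⟨N, hN⟩ := h (ε / c) (by positivity)
  refine ⟨N, fun n hn => ?_⟩
  obtain ⟨α, hα⟩ := hN n hn
  refine ⟨α, fun β => ?_⟩
  calc probBelow g q TA TB α β v ≤ c * probBelow g p TA TB α β v :=
        probBelow_le_mul_of_le_mul g p q TA TB α β v c hc
    _ < c * (ε / c) := mul_lt_mul_of_pos_left (hα β) hc0
    _ = ε := by field_simp

lemma WeaklyGuarantees.of_le_mul {g : S → A → B → ℝ} {p q : S → ℝ} {TA : S → SA} {TB : S → SB}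
    {v c : ℝ} (hc0 : 0 < c) (hc : ∀ s, q s ≤ c * p s) (h : WeaklyGuarantees g p TA TB v) :
    WeaklyGuarantees g q TA TB v := by
  intro ε hε
  obtain ⟨N, hN⟩ := h (ε / c) (by positivity)
  refine ⟨N, fun n hn β => ?_⟩
  obtain ⟨α, hα⟩ := hN n hn β
  refine ⟨α, ?_⟩
  calc probBelow g q TA TB α β v ≤ c * probBelow g p TA TB α β v :=
        probBelow_le_mul_of_le_mul g p q TA TB α β v c hc
    _ < c * (ε / c) := mul_lt_mul_of_pos_left hα hc0
    _ = ε := by field_simp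

theorem stmt1_general {S SA SB A B : Type*} [Fintype S] [Fintype A] [Fintype B]
    (g : S → A → B → ℝ) (TA : S → SA) (TB : S → SB)
    (p ptilde : S → ℝ)
    (hp0 : ∀ s, 0 ≤ p s)
    (hpt0 : ∀ s, 0 ≤ ptilde s)
    (hsupp : {s : S | 0 < p s} = {s : S | 0 < ptilde s}) :
    vsupS g p TA TB = vsupS g ptilde TA TB ∧ vsupW g p TA TB = vsupW g ptilde TA TB := by
  obtain ⟨c, hc0, hc⟩ := exists_pos_le_mul_of_pos_imp_pos p ptilde hp0 hpt0
    fun s hs => (hsupp.symm ▸ hs : s ∈ {s | 0 < p s})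
  obtain ⟨c', hc'0, hc'⟩ := exists_pos_le_mul_of_pos_imp_pos ptilde p hpt0 hp0
    fun s hs => (hsupp ▸ hs : s ∈ {s | 0 < ptilde s})
  exact ⟨congrArg sSup <| Set.ext fun v =>
      ⟨StronglyGuarantees.of_le_mul hc0 hc, StronglyGuarantees.of_le_mul hc'0 hc'⟩,
    congrArg sSup <| Set.ext fun v =>
      ⟨WeaklyGuarantees.of_le_mul hc0 hc, WeaklyGuarantees.of_le_mul hc'0 hc'⟩⟩

/-- The suprema of strongly and weakly guaranteeable values depend on the
prior only through its support. -/
theorem stmt1 {S SA SB A B : Type*} [Fintype S] [Fintype SA] [Fintype SB] [Fintype A] [Fintype B]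
    [Nonempty S] [Nonempty SA] [Nonempty SB] [Nonempty A] [Nonempty B]
    (g : S → A → B → ℝ) (TA : S → SA) (TB : S → SB)
    (p ptilde : S → ℝ)
    (hp0 : ∀ s, 0 ≤ p s) (hp1 : ∑ s, p s = 1)
    (hpt0 : ∀ s, 0 ≤ ptilde s) (hpt1 : ∑ s, ptilde s = 1)
    (hsupp : {s : S | 0 < p s} = {s : S | 0 < ptilde s}) :
    vsupS g p TA TB = vsupS g ptilde TA TB ∧ vsupW g p TA TB = vsupW g ptilde TA TB :=
  stmt1_general g TA TB p ptilde hp0 hpt0 hsupp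
end

section
/- Let 𝒯_A be surjective, and for each s_A ∈ 𝒮_A let q_{s_A} be a probability distribution on 𝒮 whose support is exactly 𝒯_A^{-1}(s_A). Then v_sup^w(p, 𝒯_A, 𝒯_B) = min_{s_A ∈ 𝒮_A} v_sup^w(q_{s_A}, ∅, 𝟙) and v_sup^s(p, 𝒯_A, 𝒯_B) = min_{s_A ∈ 𝒮_A} v_sup^s(q_{s_A}, ∅, 𝟙); i.e., the problem reduces to the case where Alice has no side information and Bob knows the state exactly. -/
open Finset

variable {S SA SB A B : Type*} [Fintype S] [Fintype A] [Fintype B]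

/-!
A value `v` is guaranteed in the game `(p, 𝒯_A, 𝒯_B)` iff it is guaranteed in every fiber game
`(q_{s_A}, ∅, 𝟙)`. If it is, Alice plays the fiber strategy selected by her signal: any Bob of
the original game, read through `𝒯_B`, is a fully informed Bob of each fiber game, and since
`p` and `q_{𝒯_A s}` are both bounded below by a positive constant on the fiber of `s`, small
failure probabilities transfer state by state. Conversely, Alice's strategy for the signal `s_A`
works in the fiber game: against a fully informed Bob `β`, in the strong case the Bob of the
original game may ignore his signal and play `β(·, s)` for each state `s` separately; in the weak
case Alice must answer a single strategy, the behavioral realization (Kuhn) of the uniform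
mixture over `s` of `β(·, s)`, which loses at most a factor `|𝒮|`. Finally, all these sets of
guaranteed values are down-closed, contain `min g` and are bounded by `max g`, so the supremum of
their intersection is the minimum of their suprema.
-/

open Filter

theorem Fintype.sum_pi_fin_succ {C : Type*} [Fintype C] {n : ℕ} (F : (Fin (n + 1) → C) → ℝ) :
    ∑ c, F c = ∑ x : C, ∑ c : Fin n → C, F (Fin.cons x c) := by
  rw [← (Fin.consEquiv fun _ => C).sum_comp, Fintype.sum_prod_type]
  rfl

theorem sum_prod_eq_one_of_causal {C : Type*} [Fintype C] [Nonempty C] :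
    ∀ {n : ℕ} (f : Fin n → (Fin n → C) → C → ℝ),
      (∀ i h h', (∀ j, j < i → h j = h' j) → f i h = f i h') → (∀ i h, ∑ x, f i h x = 1) →
      ∑ c : Fin n → C, ∏ i, f i c (c i) = 1
  | 0, _, _, _ => by simp
  | n + 1, f, hcausal, hsum => by
    have hfirst : ∀ x (c : Fin n → C), f 0 (Fin.cons x c) = f 0 fun _ => Classical.arbitrary C :=
      fun x c => hcausal 0 _ _ fun j hj => absurd hj (Fin.not_lt_zero j)
    have htail : ∀ x, ∑ c : Fin n → C, ∏ i : Fin n, f i.succ (Fin.cons x c) (c i) = 1 := by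
      refine fun x => sum_prod_eq_one_of_causal _ (fun i h h' hh => hcausal _ _ _ fun j hj => ?_)
        fun i h => hsum i.succ _
      cases j using Fin.cases with
      | zero => rfl
      | succ j => exact hh j (Fin.succ_lt_succ_iff.mp hj)
    simp_rw [Fintype.sum_pi_fin_succ, Fin.prod_univ_succ, Fin.cons_zero, Fin.cons_succ, hfirst,
      ← mul_sum, htail, mul_one]
    exact hsum 0 _

lemma Fin.univ_filter_val_lt_succ {n k : ℕ} (hk : k < n) :
    univ.filter (fun j : Fin n => (j : ℕ) < k + 1) =
      insert ⟨k, hk⟩ (univ.filter fun j : Fin n => (j : ℕ) < k) := by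
  ext j
  simp only [mem_filter, mem_univ, true_and, mem_insert, Fin.ext_iff]
  omega

namespace BehavStrategy

variable {A B ι SI SI' Act : Type*} [Fintype A] [Fintype B] [Fintype Act] {n : ℕ}

lemma prob_le_one (β : BehavStrategy A B SI Act n) (i : Fin n) (ha : Fin n → A) (hb : Fin n → B)
    (si : SI) (x : Act) : β.prob i ha hb si x ≤ 1 :=
  β.sum_one i ha hb si ▸ single_le_sum (fun y _ => β.nonneg i ha hb si y) (mem_univ x)

def comap (β : BehavStrategy A B SI Act n) (f : SI' → SI) : BehavStrategy A B SI' Act n where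
  prob i ha hb si := β.prob i ha hb (f si)
  nonneg i ha hb si := β.nonneg i ha hb (f si)
  sum_one i ha hb si := β.sum_one i ha hb (f si)
  causal i ha ha' hb hb' si := β.causal i ha ha' hb hb' (f si)

def glue (αf : SI → BehavStrategy A B Unit Act n) : BehavStrategy A B SI Act n where
  prob i ha hb si := (αf si).prob i ha hb ()
  nonneg i ha hb si := (αf si).nonneg i ha hb ()
  sum_one i ha hb si := (αf si).sum_one i ha hb ()
  causal i ha ha' hb hb' si := (αf si).causal i ha ha' hb hb' ()

noncomputable def uniform [Nonempty Act] : BehavStrategy A B SI Act n where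
  prob _ _ _ _ _ := (Fintype.card Act : ℝ)⁻¹
  nonneg _ _ _ _ _ := by positivity
  sum_one _ _ _ _ := by simp
  causal _ _ _ _ _ _ _ _ := rfl

noncomputable def prefixProb (β : BehavStrategy A B ι B n) (t : ι) (k : ℕ) (a : Fin n → A)
    (b : Fin n → B) : ℝ :=
  ∏ j ∈ univ.filter (fun j : Fin n => (j : ℕ) < k), β.prob j a b t (b j)

lemma prefixProb_nonneg (β : BehavStrategy A B ι B n) (t : ι) (k : ℕ) (a : Fin n → A)
    (b : Fin n → B) : 0 ≤ β.prefixProb t k a b :=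
  prod_nonneg fun _ _ => β.nonneg _ _ _ _ _

lemma prefixProb_succ (β : BehavStrategy A B ι B n) (t : ι) {k : ℕ} (hk : k < n)
    (a : Fin n → A) (b : Fin n → B) :
    β.prefixProb t (k + 1) a b = β.prefixProb t k a b * β.prob ⟨k, hk⟩ a b t (b ⟨k, hk⟩) := by
  rw [prefixProb, Fin.univ_filter_val_lt_succ hk, prod_insert (by simp), mul_comm, prefixProb]

lemma prefixProb_congr (β : BehavStrategy A B ι B n) (t : ι) (k : ℕ) {a a' : Fin n → A}
    {b b' : Fin n → B} (ha : ∀ j : Fin n, (j : ℕ) + 1 < k → a j = a' j)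
    (hb : ∀ j : Fin n, (j : ℕ) < k → b j = b' j) :
    β.prefixProb t k a b = β.prefixProb t k a' b' := by
  refine prod_congr rfl fun j hj => ?_
  have hjk : (j : ℕ) < k := (mem_filter.mp hj).2
  rw [β.causal j a a' b b' t (fun m hm => ha m (by omega)) (fun m hm => hb m (by omega)), hb j hjk]

variable [Fintype ι]

/-- `|ι|` times the probability that the uniform mixture over `t` of the strategies `β · t`
opens with `b 0, …, b (k - 1)` against `a`. -/
noncomputable def prefixMass (β : BehavStrategy A B ι B n) (k : ℕ) (a : Fin n → A)
    (b : Fin n → B) : ℝ :=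
  ∑ t, β.prefixProb t k a b

lemma prefixMass_nonneg (β : BehavStrategy A B ι B n) (k : ℕ) (a : Fin n → A)
    (b : Fin n → B) : 0 ≤ β.prefixMass k a b :=
  sum_nonneg fun t _ => β.prefixProb_nonneg t k a b

lemma prefixMass_congr (β : BehavStrategy A B ι B n) (k : ℕ) {a a' : Fin n → A}
    {b b' : Fin n → B} (ha : ∀ j : Fin n, (j : ℕ) + 1 < k → a j = a' j)
    (hb : ∀ j : Fin n, (j : ℕ) < k → b j = b' j) :
    β.prefixMass k a b = β.prefixMass k a' b' :=
  sum_congr rfl fun t _ => β.prefixProb_congr t k ha hb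

lemma prefixMass_succ_le (β : BehavStrategy A B ι B n) {k : ℕ} (hk : k < n) (a : Fin n → A)
    (b : Fin n → B) : β.prefixMass (k + 1) a b ≤ β.prefixMass k a b :=
  sum_le_sum fun t _ => by
    rw [prefixProb_succ β t hk]
    exact mul_le_of_le_one_right (β.prefixProb_nonneg t k a b) (β.prob_le_one _ _ _ _ _)

lemma sum_prefixMass_update (β : BehavStrategy A B ι B n) (i : Fin n) (a : Fin n → A)
    (b : Fin n → B) :
    ∑ x, β.prefixMass (i + 1) a (Function.update b i x) = β.prefixMass i a b := by
  have hbelow : ∀ x, ∀ j : Fin n, (j : ℕ) < i → Function.update b i x j = b j :=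
    fun x j hj => Function.update_of_ne (Fin.ne_of_lt hj) x b
  simp only [prefixMass]
  rw [sum_comm]
  refine sum_congr rfl fun t _ => ?_
  calc ∑ x, β.prefixProb t (i + 1) a (Function.update b i x)
      = ∑ x, β.prefixProb t i a b * β.prob i a b t x := sum_congr rfl fun x _ => by
        rw [prefixProb_succ β t i.isLt, Fin.eta, Function.update_self,
          β.prefixProb_congr t i (fun _ _ => rfl) (hbelow x),
          β.causal i a a _ b t (fun _ _ => rfl) (hbelow x)]
    _ = β.prefixProb t i a b := by rw [← mul_sum, β.sum_one, mul_one]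

/-- Kuhn's behavioral realization of that mixture: at stage `i`, the conditional law of the next
action given the past (uniform when the past has probability zero). -/
noncomputable def uniformMixture [Nonempty B] (β : BehavStrategy A B ι B n) :
    BehavStrategy A B SI B n where
  prob i ha hb _ x :=
    if β.prefixMass i ha hb = 0 then (Fintype.card B : ℝ)⁻¹
    else β.prefixMass (i + 1) ha (Function.update hb i x) / β.prefixMass i ha hb
  nonneg i ha hb _ x := by
    split_ifs
    exacts [by positivity, div_nonneg (β.prefixMass_nonneg _ _ _) (β.prefixMass_nonneg _ _ _)]
  sum_one i ha hb _ := by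
    split_ifs with h
    · simp
    · rw [← sum_div, sum_prefixMass_update, div_self h]
  causal i ha ha' hb hb' _ hA hB := by
    funext x
    have hupdate : ∀ j : Fin n, (j : ℕ) < i + 1 →
        Function.update hb i x j = Function.update hb' i x j := fun j hj => by
      rcases eq_or_ne j i with rfl | hji
      · simp
      · simp only [Function.update_of_ne hji]
        exact hB j (by omega)
    rw [β.prefixMass_congr i (fun j hj => hA j (by omega)) hB,
      β.prefixMass_congr (i + 1) (fun j hj => hA j (by omega)) hupdate]

lemma prefixMass_succ_le_mul [Nonempty B] (β : BehavStrategy A B ι B n) {k : ℕ} (hk : k < n)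
    (si : SI) (a : Fin n → A) (b : Fin n → B) :
    β.prefixMass (k + 1) a b ≤
      (β.uniformMixture (SI := SI)).prob ⟨k, hk⟩ a b si (b ⟨k, hk⟩) * β.prefixMass k a b := by
  by_cases h0 : β.prefixMass k a b = 0
  · simpa [h0] using β.prefixMass_succ_le hk a b
  · simp only [uniformMixture, if_neg h0, Function.update_eq_self]
    rw [div_mul_cancel₀ _ h0]

theorem prod_le_card_mul_prod_uniformMixture [Nonempty B] (β : BehavStrategy A B ι B n) (t : ι)
    (si : SI) (a : Fin n → A) (b : Fin n → B) :
    ∏ i, β.prob i a b t (b i) ≤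
      Fintype.card ι * ∏ i, (β.uniformMixture (SI := SI)).prob i a b si (b i) := by
  -- the mixture's stage probabilities are ratios of consecutive prefix masses, so they telescope
  have hprefix : ∀ k ≤ n, β.prefixMass k a b ≤ Fintype.card ι *
      ∏ j ∈ univ.filter (fun j : Fin n => (j : ℕ) < k),
        (β.uniformMixture (SI := SI)).prob j a b si (b j) := by
    intro k
    induction k with
    | zero => intro; simp [prefixMass, prefixProb]
    | succ k ih =>
      intro hk
      rw [Fin.univ_filter_val_lt_succ hk, prod_insert (by simp), mul_left_comm]
      exact (β.prefixMass_succ_le_mul hk si a b).trans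
        (mul_le_mul_of_nonneg_left (ih (by omega)) ((uniformMixture β).nonneg _ _ _ _ _))
  have hall : univ.filter (fun j : Fin n => (j : ℕ) < n) = univ :=
    filter_true_of_mem fun j _ => j.isLt
  calc ∏ i, β.prob i a b t (b i) = β.prefixProb t n a b := by rw [prefixProb, hall]
    _ ≤ β.prefixMass n a b :=
      single_le_sum (fun t _ => β.prefixProb_nonneg t n a b) (mem_univ t)
    _ ≤ _ := by simpa [hall] using hprefix n le_rfl

end BehavStrategy

section PathProbability

variable {S SA SB A B : Type*} [Fintype A] [Fintype B] {n : ℕ}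

noncomputable def pathProb (α : BehavStrategy A B SA A n) (β : BehavStrategy A B SB B n)
    (sa : SA) (sb : SB) (a : Fin n → A) (b : Fin n → B) : ℝ :=
  ∏ i, α.prob i a b sa (a i) * β.prob i a b sb (b i)

lemma pathProb_nonneg (α : BehavStrategy A B SA A n) (β : BehavStrategy A B SB B n)
    (sa : SA) (sb : SB) (a : Fin n → A) (b : Fin n → B) : 0 ≤ pathProb α β sa sb a b :=
  prod_nonneg fun _ _ => mul_nonneg (α.nonneg _ _ _ _ _) (β.nonneg _ _ _ _ _)

lemma sum_pathProb [Nonempty A] [Nonempty B] (α : BehavStrategy A B SA A n)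
    (β : BehavStrategy A B SB B n) (sa : SA) (sb : SB) :
    ∑ a, ∑ b, pathProb α β sa sb a b = 1 := by
  rw [← Fintype.sum_prod_type', ← (Equiv.arrowProdEquivProdArrow _ _ _).sum_comp]
  refine sum_prod_eq_one_of_causal
    (fun i c xy => α.prob i (Prod.fst ∘ c) (Prod.snd ∘ c) sa xy.1 *
      β.prob i (Prod.fst ∘ c) (Prod.snd ∘ c) sb xy.2) (fun i c c' hc => ?_) fun _ c => ?_
  · have hfst : ∀ j, j < i → (Prod.fst ∘ c) j = (Prod.fst ∘ c') j := fun j hj => by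
      simp [hc j hj]
    have hsnd : ∀ j, j < i → (Prod.snd ∘ c) j = (Prod.snd ∘ c') j := fun j hj => by
      simp [hc j hj]
    simp only [α.causal i _ _ _ _ sa hfst hsnd, β.causal i _ _ _ _ sb hfst hsnd]
  · rw [Fintype.sum_prod_type, ← sum_mul_sum, α.sum_one, β.sum_one, mul_one]

open scoped Classical in
noncomputable def stateProbBelow (g : S → A → B → ℝ) (s : S) (α : BehavStrategy A B SA A n)
    (β : BehavStrategy A B SB B n) (sa : SA) (sb : SB) (v : ℝ) : ℝ :=
  ∑ a, ∑ b, if avgPay g s a b < v then pathProb α β sa sb a b else 0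

lemma stateProbBelow_nonneg (g : S → A → B → ℝ) (s : S) (α : BehavStrategy A B SA A n)
    (β : BehavStrategy A B SB B n) (sa : SA) (sb : SB) (v : ℝ) :
    0 ≤ stateProbBelow g s α β sa sb v :=
  sum_nonneg fun a _ => sum_nonneg fun b _ => by
    split_ifs
    exacts [pathProb_nonneg α β sa sb a b, le_rfl]

lemma probBelow_eq_sum [Fintype S] (g : S → A → B → ℝ) (p : S → ℝ) (TA : S → SA) (TB : S → SB)
    (α : BehavStrategy A B SA A n) (β : BehavStrategy A B SB B n) (v : ℝ) :
    probBelow g p TA TB α β v = ∑ s, p s * stateProbBelow g s α β (TA s) (TB s) v := by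
  simp only [probBelow, stateProbBelow, inducedP, pathProb, mul_sum, mul_ite, mul_zero]

end PathProbability

section ProbBelow

variable {S SA SB A B : Type*} [Fintype S] [Fintype A] [Fintype B] {g : S → A → B → ℝ}
  {p : S → ℝ} {TA : S → SA} {TB : S → SB} {v : ℝ}

lemma stateProbBelow_lt_of_probBelow_lt (hp0 : ∀ s, 0 ≤ p s) {c δ : ℝ} (hc : 0 < c) {s : S}
    (hcs : c ≤ p s) {n : ℕ} {α : BehavStrategy A B SA A n} {β : BehavStrategy A B SB B n}
    (h : probBelow g p TA TB α β v < c * δ) : stateProbBelow g s α β (TA s) (TB s) v < δ := by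
  have hX := stateProbBelow_nonneg g s α β (TA s) (TB s) v
  refine lt_of_mul_lt_mul_left ?_ hc.le
  calc c * stateProbBelow g s α β (TA s) (TB s) v
      ≤ p s * stateProbBelow g s α β (TA s) (TB s) v := mul_le_mul_of_nonneg_right hcs hX
    _ ≤ probBelow g p TA TB α β v := by
      rw [probBelow_eq_sum]
      exact single_le_sum (f := fun s => p s * stateProbBelow g s α β (TA s) (TB s) v)
        (fun s _ => mul_nonneg (hp0 s) (stateProbBelow_nonneg ..)) (mem_univ s)
    _ < c * δ := h

lemma probBelow_lt_of_stateProbBelow_lt (hp0 : ∀ s, 0 ≤ p s) (hp1 : ∑ s, p s = 1) {δ : ℝ}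
    {n : ℕ} {α : BehavStrategy A B SA A n} {β : BehavStrategy A B SB B n}
    (h : ∀ s, 0 < p s → stateProbBelow g s α β (TA s) (TB s) v < δ) :
    probBelow g p TA TB α β v < δ := by
  obtain ⟨s₀, -, hs₀⟩ : ∃ s ∈ univ, (0 : ℝ) < p s :=
    exists_lt_of_sum_lt (by simp [hp1] : ∑ _s : S, (0 : ℝ) < ∑ s, p s)
  rw [probBelow_eq_sum]
  calc ∑ s, p s * stateProbBelow g s α β (TA s) (TB s) v < ∑ s, p s * δ := by
        refine sum_lt_sum (fun s _ => ?_) ⟨s₀, mem_univ s₀, mul_lt_mul_of_pos_left (h s₀ hs₀) hs₀⟩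
        rcases (hp0 s).eq_or_lt with hs | hs
        · simp [← hs]
        · exact (mul_lt_mul_of_pos_left (h s hs) hs).le
    _ = δ := by rw [← sum_mul, hp1, one_mul]

lemma stateProbBelow_le_card_mul_uniformMixture [Nonempty B] {SI : Type*} (s : S) {n : ℕ}
    (α : BehavStrategy A B SA A n) (β : BehavStrategy A B S B n) (sa : SA) (t : S) (si : SI) :
    stateProbBelow g s α β sa t v ≤
      Fintype.card S * stateProbBelow g s α (β.uniformMixture (SI := SI)) sa si v := by
  simp only [stateProbBelow, mul_sum]
  refine sum_le_sum fun a _ => sum_le_sum fun b _ => ?_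
  split_ifs
  · simp only [pathProb, prod_mul_distrib]
    rw [mul_left_comm]
    exact mul_le_mul_of_nonneg_left (β.prod_le_card_mul_prod_uniformMixture t si a b)
      (prod_nonneg fun _ _ => α.nonneg _ _ _ _ _)
  · simp

end ProbBelow

section AveragePayoff

variable {S A B : Type*} {g : S → A → B → ℝ}

lemma le_avgPay {m : ℝ} (hm : ∀ s a b, m ≤ g s a b) {n : ℕ} (hn : 0 < n) (s : S)
    (a : Fin n → A) (b : Fin n → B) : m ≤ avgPay g s a b := by
  rw [avgPay, le_inv_mul_iff₀ (by positivity)]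
  simpa using card_nsmul_le_sum univ _ m fun i _ => hm s (a i) (b i)

lemma avgPay_le {M : ℝ} (hM : ∀ s a b, g s a b ≤ M) {n : ℕ} (hn : 0 < n) (s : S)
    (a : Fin n → A) (b : Fin n → B) : avgPay g s a b ≤ M := by
  rw [avgPay, inv_mul_le_iff₀ (by positivity)]
  simpa using sum_le_card_nsmul univ _ M fun i _ => hM s (a i) (b i)

end AveragePayoff

section Guarantees

variable {S SA SB A B : Type*} [Fintype S] [Fintype A] [Fintype B] {g : S → A → B → ℝ}
  {p : S → ℝ} {TA : S → SA} {TB : S → SB} {v : ℝ}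

lemma stronglyGuarantees_iff : StronglyGuarantees g p TA TB v ↔ ∀ ε : ℝ, 0 < ε →
    ∀ᶠ n in atTop, ∃ α : BehavStrategy A B SA A n, ∀ β : BehavStrategy A B SB B n,
      probBelow g p TA TB α β v < ε := by
  simp only [StronglyGuarantees, atTop_basis_Ioi.eventually_iff, true_and, Set.mem_Ioi]

lemma weaklyGuarantees_iff : WeaklyGuarantees g p TA TB v ↔ ∀ ε : ℝ, 0 < ε →
    ∀ᶠ n in atTop, ∀ β : BehavStrategy A B SB B n, ∃ α : BehavStrategy A B SA A n,
      probBelow g p TA TB α β v < ε := by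
  simp only [WeaklyGuarantees, atTop_basis_Ioi.eventually_iff, true_and, Set.mem_Ioi]

lemma StronglyGuarantees.weaklyGuarantees (h : StronglyGuarantees g p TA TB v) :
    WeaklyGuarantees g p TA TB v := fun ε hε =>
  (h ε hε).imp fun _ hN n hn β => (hN n hn).imp fun _ hα => hα β

lemma probBelow_mono (hp0 : ∀ s, 0 ≤ p s) {n : ℕ} (α : BehavStrategy A B SA A n)
    (β : BehavStrategy A B SB B n) : Monotone (probBelow g p TA TB α β) := fun v v' hv => by
  refine sum_le_sum fun s _ => sum_le_sum fun a _ => sum_le_sum fun b _ => ?_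
  split_ifs with h h'
  exacts [le_rfl, absurd (h.trans_le hv) h', mul_nonneg (hp0 s) (pathProb_nonneg ..), le_rfl]

lemma isLowerSet_setOf_stronglyGuarantees (hp0 : ∀ s, 0 ≤ p s) :
    IsLowerSet {v | StronglyGuarantees g p TA TB v} := fun _ _ hv h ε hε =>
  (h ε hε).imp fun _ hN n hn => (hN n hn).imp fun α hα β =>
    (probBelow_mono hp0 α β hv).trans_lt (hα β)

lemma isLowerSet_setOf_weaklyGuarantees (hp0 : ∀ s, 0 ≤ p s) :
    IsLowerSet {v | WeaklyGuarantees g p TA TB v} := fun _ _ hv h ε hε =>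
  (h ε hε).imp fun _ hN n hn β => (hN n hn β).imp fun α hα =>
    (probBelow_mono hp0 α β hv).trans_lt hα

lemma stronglyGuarantees_of_le [Nonempty A] {m : ℝ} (hm : ∀ s a b, m ≤ g s a b) :
    StronglyGuarantees g p TA TB m := fun ε hε =>
  ⟨0, fun _ hn => ⟨.uniform, fun _ => by
    rwa [probBelow, sum_eq_zero fun s _ => sum_eq_zero fun a _ => sum_eq_zero fun b _ =>
      if_neg (le_avgPay hm hn s a b).not_gt]⟩⟩

lemma WeaklyGuarantees.le [Nonempty A] [Nonempty B] (hp1 : ∑ s, p s = 1) {M : ℝ}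
    (hM : ∀ s a b, g s a b ≤ M) (h : WeaklyGuarantees g p TA TB v) : v ≤ M := by
  by_contra! hv
  obtain ⟨N, hN⟩ := h 1 one_pos
  obtain ⟨α, hα⟩ := hN (N + 1) N.lt_succ_self .uniform
  have hcertain : ∀ s, stateProbBelow g s α .uniform (TA s) (TB s) v = 1 := fun s => by
    rw [stateProbBelow, ← sum_pathProb α .uniform (TA s) (TB s)]
    exact sum_congr rfl fun a _ => sum_congr rfl fun b _ =>
      if_pos ((avgPay_le hM N.succ_pos s a b).trans_lt hv)
  simp [probBelow_eq_sum, hcertain, hp1] at hα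

end Guarantees

section Fibers

variable {S SA SB A B : Type*} [Fintype S] [Nonempty S] [Fintype A] [Fintype B]
  {g : S → A → B → ℝ} {p : S → ℝ} {TA : S → SA} {TB : S → SB} {v : ℝ}

lemma StronglyGuarantees.fiber (hp : ∀ s, 0 < p s) {q : S → ℝ} (hq0 : ∀ s, 0 ≤ q s)
    (hq1 : ∑ s, q s = 1) {sA : SA} (hqTA : ∀ s, 0 < q s → TA s = sA)
    (h : StronglyGuarantees g p TA TB v) :
    StronglyGuarantees g q (fun _ => ()) (id : S → S) v := by
  rw [stronglyGuarantees_iff] at h ⊢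
  intro ε hε
  obtain ⟨s₀, hs₀⟩ := Finite.exists_min p
  filter_upwards [h _ (mul_pos (hp s₀) hε)] with n ⟨α, hα⟩
  refine ⟨α.comap fun _ => sA, fun β => probBelow_lt_of_stateProbBelow_lt hq0 hq1 fun s hs => ?_⟩
  obtain rfl := hqTA s hs
  exact (stateProbBelow_lt_of_probBelow_lt (fun s => (hp s).le) (hp s₀) (hs₀ s)
    (hα (β.comap fun _ => s)) :)

lemma WeaklyGuarantees.fiber [Nonempty B] (hp : ∀ s, 0 < p s) {q : S → ℝ} (hq0 : ∀ s, 0 ≤ q s)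
    (hq1 : ∑ s, q s = 1) {sA : SA} (hqTA : ∀ s, 0 < q s → TA s = sA)
    (h : WeaklyGuarantees g p TA TB v) :
    WeaklyGuarantees g q (fun _ => ()) (id : S → S) v := by
  rw [weaklyGuarantees_iff] at h ⊢
  intro ε hε
  obtain ⟨s₀, hs₀⟩ := Finite.exists_min p
  have hcard : (0 : ℝ) < Fintype.card S := by exact_mod_cast Fintype.card_pos
  filter_upwards [h _ (mul_pos (hp s₀) (div_pos hε hcard))] with n hn β
  obtain ⟨α, hα⟩ := hn (β.uniformMixture (SI := SB))
  refine ⟨α.comap fun _ => sA, probBelow_lt_of_stateProbBelow_lt hq0 hq1 fun s hs => ?_⟩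
  obtain rfl := hqTA s hs
  calc stateProbBelow g s α β (TA s) s v
      ≤ Fintype.card S * stateProbBelow g s α (β.uniformMixture (SI := SB)) (TA s) (TB s) v :=
        stateProbBelow_le_card_mul_uniformMixture s α β (TA s) s (TB s)
    _ < Fintype.card S * (ε / Fintype.card S) := mul_lt_mul_of_pos_left
        (stateProbBelow_lt_of_probBelow_lt (fun s => (hp s).le) (hp s₀) (hs₀ s) hα) hcard
    _ = ε := mul_div_cancel₀ ε hcard.ne'

variable [Fintype SA] {q : SA → S → ℝ}

lemma stronglyGuarantees_of_forall_fiber (hp0 : ∀ s, 0 ≤ p s) (hp1 : ∑ s, p s = 1)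
    (hq0 : ∀ sA s, 0 ≤ q sA s) (hq : ∀ s, 0 < q (TA s) s)
    (h : ∀ sA, StronglyGuarantees g (q sA) (fun _ => ()) (id : S → S) v) :
    StronglyGuarantees g p TA TB v := by
  simp only [stronglyGuarantees_iff] at h ⊢
  intro ε hε
  obtain ⟨s₀, hs₀⟩ := Finite.exists_min fun s => q (TA s) s
  filter_upwards [eventually_all.2 fun sA => h sA _ (mul_pos (hq s₀) hε)] with n hn
  choose αf hαf using hn
  exact ⟨.glue αf, fun β => probBelow_lt_of_stateProbBelow_lt hp0 hp1 fun s _ =>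
    (stateProbBelow_lt_of_probBelow_lt (hq0 _) (hq s₀) (hs₀ s) (hαf (TA s) (β.comap TB)) :)⟩

lemma weaklyGuarantees_of_forall_fiber (hp0 : ∀ s, 0 ≤ p s) (hp1 : ∑ s, p s = 1)
    (hq0 : ∀ sA s, 0 ≤ q sA s) (hq : ∀ s, 0 < q (TA s) s)
    (h : ∀ sA, WeaklyGuarantees g (q sA) (fun _ => ()) (id : S → S) v) :
    WeaklyGuarantees g p TA TB v := by
  simp only [weaklyGuarantees_iff] at h ⊢
  intro ε hε
  obtain ⟨s₀, hs₀⟩ := Finite.exists_min fun s => q (TA s) s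
  filter_upwards [eventually_all.2 fun sA => h sA _ (mul_pos (hq s₀) hε)] with n hn β
  choose αf hαf using fun sA => hn sA (β.comap TB)
  exact ⟨.glue αf, probBelow_lt_of_stateProbBelow_lt hp0 hp1 fun s _ =>
    (stateProbBelow_lt_of_probBelow_lt (hq0 _) (hq s₀) (hs₀ s) (hαf (TA s)) :)⟩

lemma stronglyGuarantees_iff_forall_fiber (hp : ∀ s, 0 < p s) (hp1 : ∑ s, p s = 1)
    (hq0 : ∀ sA s, 0 ≤ q sA s) (hq1 : ∀ sA, ∑ s, q sA s = 1)
    (hqsupp : ∀ sA s, 0 < q sA s ↔ TA s = sA) :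
    StronglyGuarantees g p TA TB v ↔
      ∀ sA, StronglyGuarantees g (q sA) (fun _ => ()) (id : S → S) v :=
  ⟨fun h sA => h.fiber hp (hq0 sA) (hq1 sA) fun s => (hqsupp sA s).1,
    stronglyGuarantees_of_forall_fiber (fun s => (hp s).le) hp1 hq0 fun s => (hqsupp _ s).2 rfl⟩

lemma weaklyGuarantees_iff_forall_fiber [Nonempty B] (hp : ∀ s, 0 < p s) (hp1 : ∑ s, p s = 1)
    (hq0 : ∀ sA s, 0 ≤ q sA s) (hq1 : ∀ sA, ∑ s, q sA s = 1)
    (hqsupp : ∀ sA s, 0 < q sA s ↔ TA s = sA) :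
    WeaklyGuarantees g p TA TB v ↔
      ∀ sA, WeaklyGuarantees g (q sA) (fun _ => ()) (id : S → S) v :=
  ⟨fun h sA => h.fiber hp (hq0 sA) (hq1 sA) fun s => (hqsupp sA s).1,
    weaklyGuarantees_of_forall_fiber (fun s => (hp s).le) hp1 hq0 fun s => (hqsupp _ s).2 rfl⟩

end Fibers

theorem csSup_iInter_eq_iInf_csSup {α ι : Type*} [ConditionallyCompleteLinearOrder α]
    [DenselyOrdered α] [Nonempty ι] {s : ι → Set α} (hlower : ∀ i, IsLowerSet (s i))
    (hbdd : ∀ i, BddAbove (s i)) {x : α} (hx : ∀ i, x ∈ s i) :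
    sSup (⋂ i, s i) = ⨅ i, sSup (s i) := by
  have hne : (⋂ i, s i).Nonempty := ⟨x, Set.mem_iInter.2 hx⟩
  have hbddInter : BddAbove (⋂ i, s i) :=
    (hbdd (Classical.arbitrary ι)).mono (Set.iInter_subset _ _)
  refine le_antisymm (le_ciInf fun i => csSup_le_csSup (hbdd i) hne (Set.iInter_subset _ _)) ?_
  refine le_of_forall_lt_imp_le_of_dense fun c hc => le_csSup hbddInter (Set.mem_iInter.2 fun i => ?_)
  have hbddBelow : BddBelow (Set.range fun i => sSup (s i)) :=
    ⟨x, Set.forall_mem_range.2 fun i => le_csSup (hbdd i) (hx i)⟩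
  obtain ⟨w, hw, hcw⟩ := exists_lt_of_lt_csSup ⟨x, hx i⟩ (hc.trans_le (ciInf_le hbddBelow i))
  exact hlower i hcw.le hw

theorem stmt3_general {S SA SB A B : Type*} [Fintype S] [Fintype SA] [Fintype A] [Fintype B]
    [Nonempty S] [Nonempty A] [Nonempty B]
    (g : S → A → B → ℝ) (p : S → ℝ) (hp : ∀ s, 0 < p s) (hp1 : ∑ s, p s = 1)
    (TA : S → SA) (TB : S → SB)
    (q : SA → S → ℝ)
    (hq0 : ∀ sA s, 0 ≤ q sA s) (hq1 : ∀ sA, ∑ s, q sA s = 1)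
    (hqsupp : ∀ sA s, 0 < q sA s ↔ TA s = sA) :
    (vsupW g p TA TB = ⨅ sA : SA, vsupW g (q sA) (fun _ => ()) (id : S → S)) ∧
    (vsupS g p TA TB = ⨅ sA : SA, vsupS g (q sA) (fun _ => ()) (id : S → S)) := by
  have : Nonempty SA := .map TA ‹_›
  obtain ⟨M, hM⟩ := Finite.bddAbove_range fun x : S × A × B => g x.1 x.2.1 x.2.2
  obtain ⟨m, hm⟩ := Finite.bddBelow_range fun x : S × A × B => g x.1 x.2.1 x.2.2
  replace hM : ∀ s a b, g s a b ≤ M := fun s a b => hM ⟨(s, a, b), rfl⟩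
  replace hm : ∀ s a b, m ≤ g s a b := fun s a b => hm ⟨(s, a, b), rfl⟩
  have hbdd : ∀ sA, BddAbove {v | WeaklyGuarantees g (q sA) (fun _ => ()) (id : S → S) v} :=
    fun sA => ⟨M, fun _ hv => hv.le (hq1 sA) hM⟩
  have hW : {v | WeaklyGuarantees g p TA TB v} =
      ⋂ sA, {v | WeaklyGuarantees g (q sA) (fun _ => ()) (id : S → S) v} :=
    Set.ext fun _ => by
      rw [Set.mem_iInter]
      exact weaklyGuarantees_iff_forall_fiber hp hp1 hq0 hq1 hqsupp
  have hS : {v | StronglyGuarantees g p TA TB v} =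
      ⋂ sA, {v | StronglyGuarantees g (q sA) (fun _ => ()) (id : S → S) v} :=
    Set.ext fun _ => by
      rw [Set.mem_iInter]
      exact stronglyGuarantees_iff_forall_fiber hp hp1 hq0 hq1 hqsupp
  refine ⟨?_, ?_⟩
  · rw [vsupW, hW]
    exact csSup_iInter_eq_iInf_csSup (fun sA => isLowerSet_setOf_weaklyGuarantees (hq0 sA)) hbdd
      fun _ => (stronglyGuarantees_of_le hm).weaklyGuarantees
  · rw [vsupS, hS]
    exact csSup_iInter_eq_iInf_csSup (fun sA => isLowerSet_setOf_stronglyGuarantees (hq0 sA))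
      (fun sA => (hbdd sA).mono fun _ => StronglyGuarantees.weaklyGuarantees)
      fun _ => stronglyGuarantees_of_le hm

/-- Reduction to the case where Alice has no side information and Bob knows
the state exactly: `v_sup^{w/s}(p, 𝒯_A, 𝒯_B) = min_{s_A} v_sup^{w/s}(q_{s_A}, ∅, 𝟙)`, where
`q_{s_A}` is any prior whose support is exactly `𝒯_A⁻¹(s_A)`. -/
theorem stmt3 {S SA SB A B : Type*} [Fintype S] [Fintype SA] [Fintype SB] [Fintype A] [Fintype B]
    [Nonempty S] [Nonempty SA] [Nonempty SB] [Nonempty A] [Nonempty B]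
    (g : S → A → B → ℝ) (p : S → ℝ) (hp : ∀ s, 0 < p s) (hp1 : ∑ s, p s = 1)
    (TA : S → SA) (TB : S → SB) (hTA : Function.Surjective TA)
    (q : SA → S → ℝ)
    (hq0 : ∀ sA s, 0 ≤ q sA s) (hq1 : ∀ sA, ∑ s, q sA s = 1)
    (hqsupp : ∀ sA s, 0 < q sA s ↔ TA s = sA) :
    (vsupW g p TA TB = ⨅ sA : SA, vsupW g (q sA) (fun _ => ()) (id : S → S)) ∧
    (vsupS g p TA TB = ⨅ sA : SA, vsupS g (q sA) (fun _ => ()) (id : S → S)) :=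
  stmt3_general g p hp hp1 TA TB q hq0 hq1 hqsupp
end
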